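/- Let R be a commutative ring, n : ℕ, and i₀, j₀ : Fin (n+1) with i₀ < j₀. Then any two elements of U_{i₀,j₀} commute: for all M₁, M₂ in U_{i₀,j₀}, M₁ * M₂ = M₂ * M₁. -/
import Mathlib


/-- A matrix is unipotent upper triangular: `1`s on the diagonal, `0`s below it. -/
def IsUnipotentUT {R : Type*} [CommRing R] {n : ℕ}
    (M : Matrix (Fin (n + 1)) (Fin (n + 1)) R) : Prop :=
  (∀ i, M i i = 1) ∧ ∀ i j, j < i → M i j = 0

/-- Membership in `U_{i₀,j₀}`: unipotent upper triangular, and all off-diagonal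
entries vanish except possibly those in positions `(i,j)` with `i ≤ i₀` and `j₀ ≤ j`. -/
def MemU {R : Type*} [CommRing R] {n : ℕ} (i₀ j₀ : Fin (n + 1))
    (M : Matrix (Fin (n + 1)) (Fin (n + 1)) R) : Prop :=
  IsUnipotentUT M ∧ ∀ i j, i ≠ j → ¬(i ≤ i₀ ∧ j₀ ≤ j) → M i j = 0

lemma aux_mul_zero {R : Type*} [CommRing R] {n : ℕ} (i₀ j₀ : Fin (n + 1)) (h : i₀ < j₀)
    (M₁ M₂ : Matrix (Fin (n + 1)) (Fin (n + 1)) R)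
    (h₁ : MemU i₀ j₀ M₁) (h₂ : MemU i₀ j₀ M₂) :
    (M₁ - 1) * (M₂ - 1) = 0 := by
  ext i j
  simp only [Matrix.mul_apply, Matrix.sub_apply, Matrix.zero_apply]
  apply Finset.sum_eq_zero
  intro k _
  by_cases hik : i = k
  · subst hik
    simp [h₁.1.1 i]
  · rw [Matrix.one_apply_ne hik, sub_zero]
    by_cases hr : i ≤ i₀ ∧ j₀ ≤ k
    · have hkj : k ≠ j ∨ k = j := (ne_or_eq k j)
      by_cases hkj : k = j
      · subst hkj; simp [h₂.1.1 k]
      · rw [Matrix.one_apply_ne hkj, sub_zero]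
        have : M₂ k j = 0 := by
          apply h₂.2 k j hkj
          rintro ⟨hk, _⟩
          exact absurd (lt_of_lt_of_le h hr.2) (not_lt.mpr hk)
        rw [this, mul_zero]
    · rw [h₁.2 i k hik hr, zero_mul]

/-- if `i₀ < j₀`, then `U_{i₀,j₀}` is commutative. -/
theorem stmt_5 {R : Type*} [CommRing R] {n : ℕ} (i₀ j₀ : Fin (n + 1)) (h : i₀ < j₀)
    (M₁ M₂ : Matrix (Fin (n + 1)) (Fin (n + 1)) R)
    (h₁ : MemU i₀ j₀ M₁) (h₂ : MemU i₀ j₀ M₂) :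
    M₁ * M₂ = M₂ * M₁ := by
  have e1 := aux_mul_zero i₀ j₀ h M₁ M₂ h₁ h₂
  have e2 := aux_mul_zero i₀ j₀ h M₂ M₁ h₂ h₁
  have g1 : M₁ * M₂ = M₁ + M₂ - 1 := by
    have h0 : M₁ * M₂ - M₁ - M₂ + 1 = 0 := by rw [← e1]; noncomm_ring
    calc M₁ * M₂ = (M₁ * M₂ - M₁ - M₂ + 1) + (M₁ + M₂ - 1) := by abel
    _ = M₁ + M₂ - 1 := by rw [h0, zero_add]
  have g2 : M₂ * M₁ = M₂ + M₁ - 1 := by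
    have h0 : M₂ * M₁ - M₂ - M₁ + 1 = 0 := by rw [← e2]; noncomm_ring
    calc M₂ * M₁ = (M₂ * M₁ - M₂ - M₁ + 1) + (M₂ + M₁ - 1) := by abel
    _ = M₂ + M₁ - 1 := by rw [h0, zero_add]
  rw [g1, g2, add_comm M₁ M₂]
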